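/- arXiv:1112.0539 — 8 statements merged into one kernel-verified Lean document; each statement's English description precedes it below -/
import Mathlib

section
/- Under the queue dynamics with maximal scheduling with priority vector p, if a link i satisfies Q_i(τ) ≥ 1 for every τ with t1 ≤ τ ≤ t2 − 1 (i.e., i is backlogged in every slot t1+1,…,t2), then the cumulative departures satisfy (D_i(t2) + Σ_{j∈S_i^p} D_j(t2)) − (D_i(t1) + Σ_{j∈S_i^p} D_j(t1)) ≥ t2 − t1. -/
open Finset Filter Topology

variable {V : Type*}

/-- The set `S_i^p` of higher-priority neighbors of link `i` in the interference graph `G`,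
under the priority map `p` (a smaller value means a higher priority). -/
def hpNbrs [Fintype V] [DecidableEq V] (G : SimpleGraph V) [DecidableRel G.Adj]
    (p : V → ℕ) (i : V) : Finset V :=
  (G.neighborFinset i).filter fun j => p j < p i

/-- The maximal schedule `σ(B,p)` with priority `p` on the backlogged set `B`:
`i ∈ σ(B,p)` iff `i ∈ B` and no higher-priority neighbor of `i` is in `σ(B,p)`. -/
def sched [Fintype V] [DecidableEq V] (G : SimpleGraph V) [DecidableRel G.Adj]
    (p : V → ℕ) (B : Set V) (i : V) : Prop :=
  i ∈ B ∧ ∀ j, G.Adj i j → p j < p i → ¬ sched G p B j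
termination_by p i

/-- The numerical priority values of a priority vector `p : V ≃ Fin N`
(the link `i` with `p i = 0` has the highest priority). -/
def pv [Fintype V] (p : V ≃ Fin (Fintype.card V)) : V → ℕ := fun i => (p i : ℕ)

attribute [local instance] Classical.propDecidable

/-- Cumulative departures `D_i(t)` of the queue dynamics under maximal scheduling with
priority `p`, cumulative arrival processes `A` and initial queue lengths `Q0`. -/
noncomputable def cumDep [Fintype V] [DecidableEq V] (G : SimpleGraph V) [DecidableRel G.Adj]
    (p : V → ℕ) (A : V → ℕ → ℕ) (Q0 : V → ℕ) : ℕ → V → ℕ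
  | 0, _ => 0
  | t + 1, i =>
      cumDep G p A Q0 t i +
        (if sched G p
            {j | 1 ≤ (Q0 j : ℤ) + (A j t : ℤ) - (cumDep G p A Q0 t j : ℤ)} i then 1 else 0)

/-- Queue length `Q_i(t) = Q_i(0) + A_i(t) - D_i(t)`. -/
noncomputable def queue [Fintype V] [DecidableEq V] (G : SimpleGraph V) [DecidableRel G.Adj]
    (p : V → ℕ) (A : V → ℕ → ℕ) (Q0 : V → ℕ) (t : ℕ) (i : V) : ℤ :=
  (Q0 i : ℤ) + (A i t : ℤ) - (cumDep G p A Q0 t i : ℤ)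

/-- The schedule `σ(t)` of slot `t ≥ 1`: the maximal schedule with priority `p` on the set
`B(t) = {j : Q_j(t-1) ≥ 1}` of backlogged links. -/
noncomputable def schedAt [Fintype V] [DecidableEq V] (G : SimpleGraph V) [DecidableRel G.Adj]
    (p : V → ℕ) (A : V → ℕ → ℕ) (Q0 : V → ℕ) (t : ℕ) (i : V) : Prop :=
  sched G p {j | 1 ≤ queue G p A Q0 (t - 1) j} i

lemma sched_iff [Fintype V] [DecidableEq V] (G : SimpleGraph V) [DecidableRel G.Adj]
    (p : V → ℕ) (B : Set V) (i : V) :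
    sched G p B i ↔ i ∈ B ∧ ∀ j, G.Adj i j → p j < p i → ¬ sched G p B j := by
  rw [sched]

/-- Under the queue dynamics with maximal scheduling with priority vector `p`,
if link `i` is backlogged in every slot `t1+1, …, t2` (i.e. `Q_i(τ) ≥ 1` for all
`t1 ≤ τ ≤ t2 - 1`), then
`(D_i(t2) + Σ_{j ∈ S_i^p} D_j(t2)) − (D_i(t1) + Σ_{j ∈ S_i^p} D_j(t1)) ≥ t2 − t1`. -/
theorem cumDep_growth_of_backlogged [Fintype V] [DecidableEq V] [Nonempty V]
    (G : SimpleGraph V) [DecidableRel G.Adj] (p : V ≃ Fin (Fintype.card V))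
    (A : V → ℕ → ℕ) (Q0 : V → ℕ)
    (hA0 : ∀ l, A l 0 = 0) (hAmono : ∀ l, Monotone (A l))
    (i : V) (t1 t2 : ℕ) (h12 : t1 ≤ t2)
    (hQ : ∀ τ, t1 ≤ τ → τ + 1 ≤ t2 → 1 ≤ queue G (pv p) A Q0 τ i) :
    (t2 : ℤ) - (t1 : ℤ) ≤
      ((cumDep G (pv p) A Q0 t2 i : ℤ) +
          ∑ j ∈ hpNbrs G (pv p) i, (cumDep G (pv p) A Q0 t2 j : ℤ)) -
        ((cumDep G (pv p) A Q0 t1 i : ℤ) +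
          ∑ j ∈ hpNbrs G (pv p) i, (cumDep G (pv p) A Q0 t1 j : ℤ)) := by
  induction t2, h12 using Nat.le_induction with
  | base => simp
  | succ n hn ih =>
    have ih' := ih (fun τ h1 h2 => hQ τ h1 (le_trans h2 (Nat.le_succ n)))
    have hi : 1 ≤ queue G (pv p) A Q0 n i := hQ n hn le_rfl
    set S := hpNbrs G (pv p) i with hS
    set B : Set V := {j | 1 ≤ (Q0 j : ℤ) + (A j n : ℤ) - (cumDep G (pv p) A Q0 n j : ℤ)} with hB
    have hd : ∀ j, (cumDep G (pv p) A Q0 (n+1) j : ℤ)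
        = (cumDep G (pv p) A Q0 n j : ℤ) + (if sched G (pv p) B j then 1 else 0) := by
      intro j
      rw [cumDep, ← hB]
      push_cast
      rfl
    have hstep : 1 ≤ (if sched G (pv p) B i then (1:ℤ) else 0)
        + ∑ j ∈ S, (if sched G (pv p) B j then (1:ℤ) else 0) := by
      by_cases hs : sched G (pv p) B i
      · have : (0:ℤ) ≤ ∑ j ∈ S, (if sched G (pv p) B j then (1:ℤ) else 0) :=
          Finset.sum_nonneg fun j _ => by positivity
        simp only [if_pos hs]; linarith
      · have hiB : i ∈ B := hi
        have := (sched_iff G (pv p) B i).not.mp hs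
        push_neg at this
        obtain ⟨j, hadj, hpj, hsj⟩ := this hiB
        have hjS : j ∈ S := by
          rw [hS, hpNbrs, Finset.mem_filter, SimpleGraph.mem_neighborFinset]
          exact ⟨hadj, hpj⟩
        have h1 : (if sched G (pv p) B j then (1:ℤ) else 0) = 1 := by simp [hsj]
        have h2 : (1:ℤ) ≤ ∑ j ∈ S, (if sched G (pv p) B j then (1:ℤ) else 0) :=
          le_trans h1.symm.le <| Finset.single_le_sum (f := fun k => if sched G (pv p) B k then (1:ℤ) else 0)
            (fun k _ => by positivity) hjS
        have h3 : (0:ℤ) ≤ (if sched G (pv p) B i then (1:ℤ) else 0) := by positivity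
        linarith
    have hsum : ∑ j ∈ S, (cumDep G (pv p) A Q0 (n+1) j : ℤ)
        = ∑ j ∈ S, (cumDep G (pv p) A Q0 n j : ℤ)
          + ∑ j ∈ S, (if sched G (pv p) B j then (1:ℤ) else 0) := by
      rw [← Finset.sum_add_distrib]
      exact Finset.sum_congr rfl fun j _ => hd j
    rw [hd i, hsum]
    push_cast
    linarith
end

section
/- (Theorem 1, pathwise version) Suppose the arrival processes have uniformly bounded increments, i.e., there is a constant A_max such that A_i(t) − A_i(t−1) ≤ A_max for all i ∈ V and t ≥ 1, and that A_i(t)/t → λ_i as t → ∞ for every i, where λ ∈ Λ_p. Then under the queue dynamics with maximal scheduling with priority vector p, every link is rate stable: D_i(t)/t → λ_i (equivalently Q_i(t)/t → 0) as t → ∞, for every i ∈ V. -/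
/-! In every slot in which link `i` is backlogged, `i` or one of its higher-priority neighbours
is served. So during a busy period of `Q_i` the departures of `i` and of `S_i^p` together grow
by at least one per slot, and `Q_i` grows by at most the increment of the net load
`A_i(t) + Σ_{j ∈ S_i^p} D_j(t) - t`. If the links of `S_i^p` are rate stable, the net load has
rate `λ_i + Σ_{j ∈ S_i^p} λ_j - 1 ≤ 0`; as the queue restarts from at most `A_max` after every idle
slot, its gain since the last idle slot is `o(t)`, whence `Q_i(t) = o(t)` and `D_i(t)/t → λ_i`.
Induction on the priority gives every link. -/

open Finset Filter Topology

variable {V : Type*}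

attribute [local instance] Classical.propDecidable

/-- The lower-bound stability region `Λ_p` of maximal scheduling with priority `p`:
nonnegative rate vectors `λ` with `λ_i + Σ_{j ∈ S_i^p} λ_j ≤ 1` for every link `i`. -/
def LambdaP [Fintype V] [DecidableEq V] (G : SimpleGraph V) [DecidableRel G.Adj]
    (p : V → ℕ) : Set (V → ℝ) :=
  {lam | (∀ i, 0 ≤ lam i) ∧ ∀ i, lam i + ∑ j ∈ hpNbrs G p i, lam j ≤ 1}

lemma exists_le_add_sub_of_busy_step {q f : ℕ → ℝ} {K : ℝ} {T₀ : ℕ} (hT₀ : q T₀ ≤ K)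
    (hidle : ∀ t, q t < 1 → q (t + 1) ≤ K)
    (hbusy : ∀ t, 1 ≤ q t → q (t + 1) - q t ≤ f (t + 1) - f t) :
    ∀ t, T₀ ≤ t → ∃ s, T₀ ≤ s ∧ s ≤ t ∧ q t ≤ K + (f t - f s) := by
  intro t ht
  induction t, ht using Nat.le_induction with
  | base => exact ⟨T₀, le_rfl, le_rfl, by simpa using hT₀⟩
  | succ t ht ih =>
    by_cases hq : 1 ≤ q t
    · obtain ⟨s, hs, hst, hle⟩ := ih
      exact ⟨s, hs, hst.trans t.le_succ, by linarith [hbusy t hq]⟩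
    · exact ⟨t + 1, by omega, le_rfl, by simpa using hidle t (not_le.1 hq)⟩

lemma eventually_abs_sub_mul_le_of_tendsto_div {f : ℕ → ℝ} {c δ : ℝ} (hδ : 0 < δ)
    (hf : Tendsto (fun t : ℕ => f t / t) atTop (𝓝 c)) :
    ∀ᶠ t : ℕ in atTop, |f t - c * t| ≤ δ * t := by
  filter_upwards [hf.eventually (Metric.ball_mem_nhds c hδ), eventually_gt_atTop 0]
    with t ht htpos
  have htpos : (0 : ℝ) < t := by exact_mod_cast htpos
  rw [Real.dist_eq] at ht
  calc |f t - c * t| = |(f t / t - c) * t| := by rw [sub_mul, div_mul_cancel₀ _ htpos.ne']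
    _ = |f t / t - c| * t := by rw [abs_mul, abs_of_pos htpos]
    _ ≤ δ * t := by gcongr

lemma tendsto_div_atTop_zero_of_busy_step {q f : ℕ → ℝ} {c K : ℝ} (hc : c ≤ 0)
    (hq : ∀ t, 0 ≤ q t) (hf : Tendsto (fun t : ℕ => f t / t) atTop (𝓝 c))
    (hidle : ∀ t, q t < 1 → q (t + 1) ≤ K)
    (hbusy : ∀ t, 1 ≤ q t → q (t + 1) - q t ≤ f (t + 1) - f t) :
    Tendsto (fun t : ℕ => q t / t) atTop (𝓝 0) := by
  refine tendsto_order.2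
    ⟨fun a ha => .of_forall fun t => ha.trans_le (div_nonneg (hq t) t.cast_nonneg), fun a ha => ?_⟩
  obtain ⟨T₀, hT₀⟩ := eventually_atTop.1 (eventually_abs_sub_mul_le_of_tendsto_div
    (show 0 < a / 4 by positivity) hf)
  have hgrowth : ∀ t, T₀ ≤ t → q t ≤ max K (q T₀) + a / 2 * t := by
    intro t ht
    obtain ⟨s, hs, hst, hle⟩ := exists_le_add_sub_of_busy_step (le_max_right K (q T₀))
      (fun t h => (hidle t h).trans (le_max_left _ _)) hbusy t ht
    have hts : (s : ℝ) ≤ t := by exact_mod_cast hst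
    have hcts : c * t ≤ c * s := mul_le_mul_of_nonpos_left hts hc
    have hats : a / 4 * s ≤ a / 4 * t := by gcongr
    linarith [abs_le.1 (hT₀ t ht), abs_le.1 (hT₀ s hs)]
  filter_upwards [eventually_ge_atTop T₀, eventually_gt_atTop 0,
    (tendsto_const_div_atTop_nhds_zero_nat (max K (q T₀))).eventually (gt_mem_nhds (half_pos ha))]
    with t ht htpos hK
  have htpos : (0 : ℝ) < t := by exact_mod_cast htpos
  calc q t / t ≤ (max K (q T₀) + a / 2 * t) / t := by gcongr; exact hgrowth t ht
    _ = max K (q T₀) / t + a / 2 := by field_simp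
    _ < a := by linarith

section QueueDynamics

variable [Fintype V] [DecidableEq V] {G : SimpleGraph V} [DecidableRel G.Adj] {p : V → ℕ}
  {A : V → ℕ → ℕ} {Q0 : V → ℕ}

lemma mem_hpNbrs {i j : V} : j ∈ hpNbrs G p i ↔ G.Adj i j ∧ p j < p i := by
  simp [hpNbrs]

lemma exists_mem_hpNbrs_sched_of_not_sched {B : Set V} {i : V} (hi : i ∈ B)
    (h : ¬ sched G p B i) : ∃ j ∈ hpNbrs G p i, sched G p B j := by
  rw [sched] at h
  push Not at h
  obtain ⟨j, hadj, hlt, hj⟩ := h hi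
  exact ⟨j, mem_hpNbrs.2 ⟨hadj, hlt⟩, hj⟩

lemma mem_of_sched {B : Set V} {i : V} (h : sched G p B i) : i ∈ B := by
  rw [sched] at h
  exact h.1

lemma cumDep_succ (t : ℕ) (i : V) :
    cumDep G p A Q0 (t + 1) i = cumDep G p A Q0 t i +
      if sched G p {j | 1 ≤ queue G p A Q0 t j} i then 1 else 0 := rfl

lemma cumDep_le_succ (t : ℕ) (i : V) : cumDep G p A Q0 t i ≤ cumDep G p A Q0 (t + 1) i := by
  rw [cumDep_succ]
  exact Nat.le_add_right _ _

lemma cumDep_succ_of_sched {t : ℕ} {i : V} (h : sched G p {j | 1 ≤ queue G p A Q0 t j} i) :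
    cumDep G p A Q0 (t + 1) i = cumDep G p A Q0 t i + 1 := by
  rw [cumDep_succ, if_pos h]

lemma cumDep_succ_of_not_sched {t : ℕ} {i : V}
    (h : ¬ sched G p {j | 1 ≤ queue G p A Q0 t j} i) :
    cumDep G p A Q0 (t + 1) i = cumDep G p A Q0 t i := by
  rw [cumDep_succ, if_neg h, add_zero]

lemma queue_nonneg (hA : ∀ l, Monotone (A l)) (t : ℕ) (i : V) : 0 ≤ queue G p A Q0 t i := by
  induction t generalizing i with
  | zero =>
    simp only [queue, cumDep, Nat.cast_zero, sub_zero]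
    positivity
  | succ t ih =>
    have hAt : (A i t : ℤ) ≤ A i (t + 1) := by exact_mod_cast hA i t.le_succ
    have hQt := ih i
    by_cases hs : sched G p {j | 1 ≤ queue G p A Q0 t j} i
    · have hbacklog := mem_of_sched hs
      rw [Set.mem_ofPred_eq] at hbacklog
      simp only [queue, cumDep_succ_of_sched hs] at hbacklog hQt ⊢
      push_cast
      linarith
    · simp only [queue, cumDep_succ_of_not_sched hs] at hQt ⊢
      linarith

lemma queue_succ_le_of_lt_one {Amax : ℕ} (hAbd : ∀ l t, A l (t + 1) - A l t ≤ Amax) {t : ℕ}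
    {i : V} (h : queue G p A Q0 t i < 1) : queue G p A Q0 (t + 1) i ≤ Amax := by
  have hAt := hAbd i t
  have hD := cumDep_le_succ (G := G) (p := p) (A := A) (Q0 := Q0) t i
  simp only [queue] at h ⊢
  omega

lemma cumDep_add_sum_hpNbrs_lt_succ {t : ℕ} {i : V} (h : 1 ≤ queue G p A Q0 t i) :
    cumDep G p A Q0 t i + ∑ j ∈ hpNbrs G p i, cumDep G p A Q0 t j <
      cumDep G p A Q0 (t + 1) i + ∑ j ∈ hpNbrs G p i, cumDep G p A Q0 (t + 1) j := by
  have hi : cumDep G p A Q0 t i ≤ cumDep G p A Q0 (t + 1) i := cumDep_le_succ t i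
  have hsum_le : ∑ j ∈ hpNbrs G p i, cumDep G p A Q0 t j ≤
      ∑ j ∈ hpNbrs G p i, cumDep G p A Q0 (t + 1) j :=
    sum_le_sum fun j _ => cumDep_le_succ t j
  by_cases hs : sched G p {j | 1 ≤ queue G p A Q0 t j} i
  · rw [cumDep_succ_of_sched hs]
    omega
  · obtain ⟨j, hj, hsj⟩ := exists_mem_hpNbrs_sched_of_not_sched
      (show i ∈ {j | 1 ≤ queue G p A Q0 t j} from h) hs
    have hsum_lt : ∑ j ∈ hpNbrs G p i, cumDep G p A Q0 t j <
        ∑ j ∈ hpNbrs G p i, cumDep G p A Q0 (t + 1) j :=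
      sum_lt_sum (fun j _ => cumDep_le_succ t j) ⟨j, hj, by rw [cumDep_succ_of_sched hsj]; omega⟩
    omega

variable (G p A Q0) in
noncomputable def netLoad (i : V) (t : ℕ) : ℝ :=
  A i t + ∑ j ∈ hpNbrs G p i, (cumDep G p A Q0 t j : ℝ) - t

lemma queue_succ_sub_le_netLoad {t : ℕ} {i : V} (h : 1 ≤ queue G p A Q0 t i) :
    (queue G p A Q0 (t + 1) i : ℝ) - queue G p A Q0 t i ≤
      netLoad G p A Q0 i (t + 1) - netLoad G p A Q0 i t := by
  have hslot : (cumDep G p A Q0 t i : ℝ) + ∑ j ∈ hpNbrs G p i, (cumDep G p A Q0 t j : ℝ) + 1 ≤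
      cumDep G p A Q0 (t + 1) i + ∑ j ∈ hpNbrs G p i, (cumDep G p A Q0 (t + 1) j : ℝ) := by
    exact_mod_cast cumDep_add_sum_hpNbrs_lt_succ h
  simp only [queue, netLoad]
  push_cast
  linarith

lemma tendsto_netLoad_div {lam : V → ℝ} {i : V}
    (hA : Tendsto (fun t : ℕ => (A i t : ℝ) / t) atTop (𝓝 (lam i)))
    (hD : ∀ j ∈ hpNbrs G p i, Tendsto (fun t : ℕ => (cumDep G p A Q0 t j : ℝ) / t)
      atTop (𝓝 (lam j))) :
    Tendsto (fun t : ℕ => netLoad G p A Q0 i t / t) atTop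
      (𝓝 (lam i + ∑ j ∈ hpNbrs G p i, lam j - 1)) := by
  refine ((hA.add (tendsto_finsetSum _ hD)).sub tendsto_const_nhds).congr' ?_
  filter_upwards [eventually_ne_atTop 0] with t ht
  rw [netLoad, ← sum_div]
  field_simp

theorem tendsto_cumDep_div_of_hpNbrs (hAmono : ∀ l, Monotone (A l)) {Amax : ℕ}
    (hAbd : ∀ l t, A l (t + 1) - A l t ≤ Amax) {lam : V → ℝ} {i : V}
    (hcap : lam i + ∑ j ∈ hpNbrs G p i, lam j ≤ 1)
    (hA : Tendsto (fun t : ℕ => (A i t : ℝ) / t) atTop (𝓝 (lam i)))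
    (hD : ∀ j ∈ hpNbrs G p i, Tendsto (fun t : ℕ => (cumDep G p A Q0 t j : ℝ) / t)
      atTop (𝓝 (lam j))) :
    Tendsto (fun t : ℕ => (cumDep G p A Q0 t i : ℝ) / t) atTop (𝓝 (lam i)) := by
  have hQ : Tendsto (fun t : ℕ => (queue G p A Q0 t i : ℝ) / t) atTop (𝓝 0) :=
    tendsto_div_atTop_zero_of_busy_step (K := Amax) (sub_nonpos.2 hcap)
      (fun t => by exact_mod_cast queue_nonneg hAmono t i) (tendsto_netLoad_div hA hD)
      (fun t h => by exact_mod_cast queue_succ_le_of_lt_one hAbd (by exact_mod_cast h))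
      (fun t h => queue_succ_sub_le_netLoad (by exact_mod_cast h))
  have hQ0 := tendsto_const_div_atTop_nhds_zero_nat (Q0 i : ℝ)
  convert (hQ0.add hA).sub hQ using 2 with t
  · simp only [queue]
    push_cast
    ring
  · ring

end QueueDynamics

theorem rate_stable_of_mem_LambdaP_general [Fintype V] [DecidableEq V]
    (G : SimpleGraph V) [DecidableRel G.Adj] (p : V ≃ Fin (Fintype.card V))
    (A : V → ℕ → ℕ) (Q0 : V → ℕ)
    (hAmono : ∀ l, Monotone (A l))
    (Amax : ℕ) (hAbd : ∀ l t, A l (t + 1) - A l t ≤ Amax)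
    (lam : V → ℝ) (hlam : lam ∈ LambdaP G (pv p))
    (hrate : ∀ i, Tendsto (fun t : ℕ => (A i t : ℝ) / (t : ℝ)) atTop (𝓝 (lam i))) :
    ∀ i, Tendsto (fun t : ℕ => (cumDep G (pv p) A Q0 t i : ℝ) / (t : ℝ))
      atTop (𝓝 (lam i)) := by
  intro i
  induction hn : pv p i using Nat.strong_induction_on generalizing i with
  | _ n ih =>
    refine tendsto_cumDep_div_of_hpNbrs hAmono hAbd (hlam.2 i) (hrate i) fun j hj => ?_
    exact ih _ (hn ▸ (mem_hpNbrs.1 hj).2) j rfl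

/-- Theorem 1, pathwise version: if the arrivals have uniformly bounded
increments, `A_i(t)/t → λ_i` for every link `i`, and `λ ∈ Λ_p`, then under the queue
dynamics with maximal scheduling with priority vector `p` every link is rate stable:
`D_i(t)/t → λ_i` for every `i`. -/
theorem rate_stable_of_mem_LambdaP [Fintype V] [DecidableEq V] [Nonempty V]
    (G : SimpleGraph V) [DecidableRel G.Adj] (p : V ≃ Fin (Fintype.card V))
    (A : V → ℕ → ℕ) (Q0 : V → ℕ)
    (hA0 : ∀ l, A l 0 = 0) (hAmono : ∀ l, Monotone (A l))
    (Amax : ℕ) (hAbd : ∀ l t, A l (t + 1) - A l t ≤ Amax)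
    (lam : V → ℝ) (hlam : lam ∈ LambdaP G (pv p))
    (hrate : ∀ i, Tendsto (fun t : ℕ => (A i t : ℝ) / (t : ℝ)) atTop (𝓝 (lam i))) :
    ∀ i, Tendsto (fun t : ℕ => (cumDep G (pv p) A Q0 t i : ℝ) / (t : ℝ))
      atTop (𝓝 (lam i)) :=
  rate_stable_of_mem_LambdaP_general G p A Q0 hAmono Amax hAbd lam hlam hrate
end

section
/- Let p be a priority vector. If λ ∈ Λ_opt, then for every link i ∈ V one has λ_i + Σ_{j∈S_i^p} λ_j ≤ Δ_i^p. -/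
open Finset Filter Topology

variable {V : Type*}

/-- `s` is an independent set of `G`. -/
def indepIn (G : SimpleGraph V) (s : Finset V) : Prop :=
  ∀ a ∈ s, ∀ b ∈ s, a ≠ b → ¬ G.Adj a b

/-- The optimal stability region `Λ_opt`: the convex hull of the 0/1 indicator vectors of
the independent sets of `G`. -/
def LambdaOpt [Fintype V] [DecidableEq V] (G : SimpleGraph V) : Set (V → ℝ) :=
  convexHull ℝ {x | ∃ s : Finset V, indepIn G s ∧ x = fun v => if v ∈ s then (1 : ℝ) else 0}

attribute [local instance] Classical.propDecidable

/-- The prioritized interference degree `Δ_i^p` of link `i`: the maximum cardinality of an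
independent set of `G` contained in `{i} ∪ S_i^p`. -/
noncomputable def prioDeg [Fintype V] [DecidableEq V] (G : SimpleGraph V)
    [DecidableRel G.Adj] (p : V → ℕ) (i : V) : ℕ :=
  ((insert i (hpNbrs G p i)).powerset.filter (indepIn G)).sup Finset.card

/-- The prioritized interference degree `Δ^p = max_{i ∈ V} Δ_i^p` of the network. -/
noncomputable def prioDegNet [Fintype V] [DecidableEq V] (G : SimpleGraph V)
    [DecidableRel G.Adj] (p : V → ℕ) : ℕ :=
  Finset.univ.sup (prioDeg G p)

/-- `Δ_sp`: the minimum of `Δ^p` over all priority vectors `p`. -/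
noncomputable def prioDegSP [Fintype V] [DecidableEq V] (G : SimpleGraph V)
    [DecidableRel G.Adj] : ℕ :=
  ⨅ p : V ≃ Fin (Fintype.card V), prioDegNet G (pv p)

/-- if `λ ∈ Λ_opt`, then for every link `i`,
`λ_i + Σ_{j ∈ S_i^p} λ_j ≤ Δ_i^p`. -/
theorem neighborhood_load_le_prioDeg [Fintype V] [DecidableEq V] [Nonempty V]
    (G : SimpleGraph V) [DecidableRel G.Adj] (p : V ≃ Fin (Fintype.card V))
    (lam : V → ℝ) (hlam : lam ∈ LambdaOpt G) :
    ∀ i, lam i + ∑ j ∈ hpNbrs G (pv p) i, lam j ≤ (prioDeg G (pv p) i : ℝ) := by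
  intro i
  set q : V → ℕ := pv p with hq
  have hconv : Convex ℝ {x : V → ℝ |
      x i + ∑ j ∈ hpNbrs G q i, x j ≤ (prioDeg G q i : ℝ)} := by
    apply convex_halfSpace_le
    constructor
    · intro a b
      simp [Finset.sum_add_distrib]
      ring
    · intro c a
      simp [Finset.mul_sum, mul_add]
  have hiS : i ∉ hpNbrs G q i := by
    simp [hpNbrs]
  have hsub : {x : V → ℝ | ∃ s : Finset V, indepIn G s ∧
      x = fun v => if v ∈ s then (1 : ℝ) else 0} ⊆
      {x : V → ℝ | x i + ∑ j ∈ hpNbrs G q i, x j ≤ (prioDeg G q i : ℝ)} := by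
    rintro x ⟨s, hs, rfl⟩
    show (if i ∈ s then (1:ℝ) else 0) + ∑ j ∈ hpNbrs G q i,
        (if j ∈ s then (1:ℝ) else 0) ≤ (prioDeg G q i : ℝ)
    have heq : (if i ∈ s then (1:ℝ) else 0) + ∑ j ∈ hpNbrs G q i,
        (if j ∈ s then (1:ℝ) else 0) =
        ∑ j ∈ insert i (hpNbrs G q i), (if j ∈ s then (1:ℝ) else 0) :=
      by rw [Finset.sum_insert hiS]
    rw [heq, Finset.sum_boole]
    set T := (insert i (hpNbrs G q i)).filter (· ∈ s) with hT
    have hmem : T ∈ (insert i (hpNbrs G q i)).powerset.filter (indepIn G) := by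
      rw [Finset.mem_filter, Finset.mem_powerset]
      refine ⟨Finset.filter_subset _ _, ?_⟩
      intro a ha b hb hab
      exact hs a (Finset.mem_filter.1 ha).2 b (Finset.mem_filter.1 hb).2 hab
    have hcard : T.card ≤ prioDeg G q i := Finset.le_sup hmem
    exact_mod_cast hcard
  exact convexHull_min hsub hconv hlam
end

section
/- (Theorem 3) Let p be a priority vector. For any λ ∈ Λ_opt, the scaled vector (1/Δ^p)·λ belongs to Λ_p. -/
open Finset Filter Topology

variable {V : Type*}

attribute [local instance] Classical.propDecidable

/-- Theorem 3: for any `λ ∈ Λ_opt`, the scaled vector `(1/Δ^p)·λ` belongs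
to `Λ_p`. -/
theorem scaled_mem_LambdaP [Fintype V] [DecidableEq V] [Nonempty V]
    (G : SimpleGraph V) [DecidableRel G.Adj] (p : V ≃ Fin (Fintype.card V))
    (lam : V → ℝ) (hlam : lam ∈ LambdaOpt G) :
    (fun i => (1 / (prioDegNet G (pv p) : ℝ)) * lam i) ∈ LambdaP G (pv p) := by
  set q := pv p with hq
  set D := prioDegNet G q with hDdef
  have hD1 : 1 ≤ D := by
    obtain ⟨i⟩ := ‹Nonempty V›
    have h1 : ({i} : Finset V) ∈
        (insert i (hpNbrs G q i)).powerset.filter (indepIn G) := by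
      rw [Finset.mem_filter, Finset.mem_powerset]
      refine ⟨Finset.singleton_subset_iff.2 (Finset.mem_insert_self _ _), ?_⟩
      intro a ha b hb hab
      rw [Finset.mem_singleton] at ha hb
      exact absurd (ha.trans hb.symm) hab
    have h2 : 1 ≤ prioDeg G q i := by
      have h3 := Finset.le_sup (f := Finset.card) h1
      rwa [Finset.card_singleton] at h3
    exact h2.trans (Finset.le_sup (Finset.mem_univ i))
  have hDpos : (0:ℝ) < (D:ℝ) := by exact_mod_cast hD1
  have hDinv : (0:ℝ) ≤ 1 / (D:ℝ) := by positivity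
  set T : Set (V → ℝ) :=
    {x | (fun i => (1/(D:ℝ)) * x i) ∈ LambdaP G q} with hT
  have hconv : Convex ℝ T := by
    intro x hx y hy a b ha hb hab
    obtain ⟨hx0, hx1⟩ := hx
    obtain ⟨hy0, hy1⟩ := hy
    constructor
    · intro i
      simp only [Pi.add_apply, Pi.smul_apply, smul_eq_mul]
      have h1 := hx0 i; have h2 := hy0 i
      simp only at h1 h2
      nlinarith
    · intro i
      have hxi := hx1 i; have hyi := hy1 i
      simp only at hxi hyi ⊢
      simp only [Pi.add_apply, Pi.smul_apply, smul_eq_mul]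
      have hsum : ∑ j ∈ hpNbrs G q i, (1/(D:ℝ)) * (a * x j + b * y j)
          = a * (∑ j ∈ hpNbrs G q i, (1/(D:ℝ)) * x j)
            + b * (∑ j ∈ hpNbrs G q i, (1/(D:ℝ)) * y j) := by
        rw [Finset.mul_sum, Finset.mul_sum, ← Finset.sum_add_distrib]
        exact Finset.sum_congr rfl fun j _ => by ring
      rw [hsum]
      nlinarith [mul_le_mul_of_nonneg_left hxi ha, mul_le_mul_of_nonneg_left hyi hb]
  have hgen : {x : V → ℝ | ∃ s : Finset V, indepIn G s ∧
      x = fun v => if v ∈ s then (1 : ℝ) else 0} ⊆ T := by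
    rintro x ⟨s, hs, rfl⟩
    constructor
    · intro i
      simp only
      have : (0:ℝ) ≤ if i ∈ s then (1:ℝ) else 0 := by positivity
      positivity
    · intro i
      simp only
      set S := hpNbrs G q i with hS
      have hiS : i ∉ S := by
        intro h
        rw [hS, hpNbrs, Finset.mem_filter, SimpleGraph.mem_neighborFinset] at h
        exact G.irrefl h.1
      set t := (insert i S) ∩ s with ht
      have htsub : t ⊆ insert i S := Finset.inter_subset_left
      have htind : indepIn G t := by
        intro a ha b hb hab
        exact hs a (Finset.mem_of_mem_inter_right ha) b
          (Finset.mem_of_mem_inter_right hb) hab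
      have htcard : t.card ≤ D := by
        have h1 : t ∈ (insert i S).powerset.filter (indepIn G) := by
          rw [Finset.mem_filter, Finset.mem_powerset]; exact ⟨htsub, htind⟩
        have h2 : t.card ≤ prioDeg G q i := Finset.le_sup (f := Finset.card) h1
        exact h2.trans (Finset.le_sup (Finset.mem_univ i))
      have hsum : ∑ j ∈ S, (if j ∈ s then (1:ℝ) else 0) = ((S ∩ s).card : ℝ) := by
        rw [Finset.sum_ite_mem, Finset.sum_const, nsmul_eq_mul, mul_one]
      have hcard : (if i ∈ s then (1:ℝ) else 0) + ((S ∩ s).card : ℝ)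
          = (t.card : ℝ) := by
        by_cases h : i ∈ s
        · rw [if_pos h, ht, Finset.insert_inter_of_mem h,
            Finset.card_insert_of_notMem (fun hc =>
              hiS (Finset.mem_of_mem_inter_left hc))]
          push_cast; ring
        · rw [if_neg h, ht, Finset.insert_inter_of_notMem h, zero_add]
      have key : (1/(D:ℝ)) * (if i ∈ s then (1:ℝ) else 0)
          + ∑ j ∈ S, (1/(D:ℝ)) * (if j ∈ s then (1:ℝ) else 0)
          = (1/(D:ℝ)) * (t.card : ℝ) := by
        rw [← Finset.mul_sum, ← mul_add, hsum, hcard]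
      rw [key]
      have : (1/(D:ℝ)) * (t.card : ℝ) ≤ (1/(D:ℝ)) * (D:ℝ) :=
        mul_le_mul_of_nonneg_left (by exact_mod_cast htcard) hDinv
      calc (1/(D:ℝ)) * (t.card : ℝ) ≤ (1/(D:ℝ)) * (D:ℝ) := this
        _ = 1 := one_div_mul_cancel (ne_of_gt hDpos)
  have := convexHull_min hgen hconv hlam
  exact this
end

section
/- (Corollary 1) For any λ ∈ Λ_opt, the scaled vector (1/Δ_sp)·λ belongs to Λ_sp = ∪_p Λ_p, i.e., there exists a priority vector p such that (1/Δ_sp)·λ ∈ Λ_p. -/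
open Finset Filter Topology

variable {V : Type*}

attribute [local instance] Classical.propDecidable

lemma indepIn_subset (G : SimpleGraph V) {s t : Finset V} (h : indepIn G s)
    (hts : t ⊆ s) : indepIn G t :=
  fun a ha b hb hab => h a (hts ha) b (hts hb) hab

lemma one_le_prioDegNet [Fintype V] [DecidableEq V] [Nonempty V]
    (G : SimpleGraph V) [DecidableRel G.Adj] (p : V → ℕ) :
    1 ≤ prioDegNet G p := by
  obtain ⟨i⟩ := ‹Nonempty V›
  have h1 : 1 ≤ prioDeg G p i := by
    have hmem : ({i} : Finset V) ∈
        ((insert i (hpNbrs G p i)).powerset.filter (indepIn G)) := by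
      simp only [Finset.mem_filter, Finset.mem_powerset]
      refine ⟨Finset.singleton_subset_iff.2 (Finset.mem_insert_self _ _), ?_⟩
      intro a ha b hb hab
      simp only [Finset.mem_singleton] at ha hb
      exact absurd (ha.trans hb.symm) hab
    have h := Finset.le_sup (f := Finset.card) hmem
    rwa [Finset.card_singleton] at h
  exact h1.trans (Finset.le_sup (Finset.mem_univ i))

lemma constraint_le_prioDegNet [Fintype V] [DecidableEq V]
    (G : SimpleGraph V) [DecidableRel G.Adj] (p : V → ℕ)
    (lam : V → ℝ) (hlam : lam ∈ LambdaOpt G) (i : V) :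
    lam i + ∑ j ∈ hpNbrs G p i, lam j ≤ (prioDegNet G p : ℝ) := by
  set C : Set (V → ℝ) :=
    {x | x i + ∑ j ∈ hpNbrs G p i, x j ≤ (prioDegNet G p : ℝ)} with hC
  have hconv : Convex ℝ C := by
    intro x hx y hy a b ha hb hab
    simp only [hC, Set.mem_setOf_eq] at hx hy ⊢
    have : ∑ j ∈ hpNbrs G p i, (a • x + b • y) j
        = a * ∑ j ∈ hpNbrs G p i, x j + b * ∑ j ∈ hpNbrs G p i, y j := by
      simp [Finset.sum_add_distrib, Finset.mul_sum]
    simp only [Pi.add_apply, Pi.smul_apply, smul_eq_mul] at this ⊢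
    rw [this]
    nlinarith
  have hsub : LambdaOpt G ⊆ C := by
    apply convexHull_min _ hconv
    rintro x ⟨s, hs, rfl⟩
    simp only [hC, Set.mem_setOf_eq]
    have hi : i ∉ hpNbrs G p i := by
      simp [hpNbrs]
    have hsum : (if i ∈ s then (1:ℝ) else 0)
        + ∑ j ∈ hpNbrs G p i, (if j ∈ s then (1:ℝ) else 0)
        = ((insert i (hpNbrs G p i) ∩ s).card : ℝ) := by
      rw [← Finset.sum_insert (f := fun j => if j ∈ s then (1:ℝ) else 0) hi]
      rw [Finset.sum_ite_mem]
      simp [Finset.inter_comm]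
    rw [hsum]
    have hmem : (insert i (hpNbrs G p i) ∩ s) ∈
        ((insert i (hpNbrs G p i)).powerset.filter (indepIn G)) := by
      simp only [Finset.mem_filter, Finset.mem_powerset]
      exact ⟨Finset.inter_subset_left,
        indepIn_subset G hs Finset.inter_subset_right⟩
    have h1 : (insert i (hpNbrs G p i) ∩ s).card ≤ prioDeg G p i :=
      Finset.le_sup (f := Finset.card) hmem
    have h2 : prioDeg G p i ≤ prioDegNet G p :=
      Finset.le_sup (Finset.mem_univ i)
    exact_mod_cast h1.trans h2
  exact hsub hlam

lemma nonneg_of_mem_LambdaOpt [Fintype V] [DecidableEq V]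
    (G : SimpleGraph V) (lam : V → ℝ) (hlam : lam ∈ LambdaOpt G) (i : V) :
    0 ≤ lam i := by
  set C : Set (V → ℝ) := {x | 0 ≤ x i} with hC
  have hconv : Convex ℝ C := by
    intro x hx y hy a b ha hb hab
    simp only [hC, Set.mem_setOf_eq] at hx hy ⊢
    have : (a • x + b • y) i = a * x i + b * y i := by simp
    rw [this]; nlinarith
  have hsub : LambdaOpt G ⊆ C := by
    apply convexHull_min _ hconv
    rintro x ⟨s, hs, rfl⟩
    simp only [hC, Set.mem_setOf_eq]
    positivity
  exact hsub hlam

/-- Corollary 1: for any `λ ∈ Λ_opt`, the scaled vector `(1/Δ_sp)·λ` belongs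
to `Λ_sp = ∪_p Λ_p`: there is a priority vector `p` with `(1/Δ_sp)·λ ∈ Λ_p`. -/
theorem scaled_mem_LambdaSP [Fintype V] [DecidableEq V] [Nonempty V]
    (G : SimpleGraph V) [DecidableRel G.Adj]
    (lam : V → ℝ) (hlam : lam ∈ LambdaOpt G) :
    ∃ p : V ≃ Fin (Fintype.card V),
      (fun i => (1 / (prioDegSP G : ℝ)) * lam i) ∈ LambdaP G (pv p) := by
  have hne : Nonempty (V ≃ Fin (Fintype.card V)) := ⟨Fintype.equivFin V⟩
  -- the infimum in ℕ is attained
  have hmem : prioDegSP G ∈ Set.range (fun p : V ≃ Fin (Fintype.card V) =>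
      prioDegNet G (pv p)) := by
    have : prioDegSP G = sInf (Set.range (fun p : V ≃ Fin (Fintype.card V) =>
        prioDegNet G (pv p))) := rfl
    rw [this]
    exact Nat.sInf_mem (Set.range_nonempty _)
  obtain ⟨p, hp⟩ := hmem
  simp only [] at hp
  refine ⟨p, ?_, ?_⟩
  · intro i
    have h0 := nonneg_of_mem_LambdaOpt G lam hlam i
    have hΔ : (0:ℝ) ≤ (prioDegSP G : ℝ) := by positivity
    positivity
  · intro i
    simp only []
    have hc := constraint_le_prioDegNet G (pv p) lam hlam i
    rw [hp] at hc
    have h1 : 1 ≤ prioDegSP G := hp ▸ one_le_prioDegNet G (pv p)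
    have hΔpos : (0:ℝ) < (prioDegSP G : ℝ) := by exact_mod_cast h1
    have hsum : (1 / (prioDegSP G : ℝ)) * lam i
        + ∑ j ∈ hpNbrs G (pv p) i, (1 / (prioDegSP G : ℝ)) * lam j
        = (1 / (prioDegSP G : ℝ)) * (lam i + ∑ j ∈ hpNbrs G (pv p) i, lam j) := by
      rw [← Finset.mul_sum]; ring
    rw [hsum]
    rw [div_mul_eq_mul_div, one_mul, div_le_one hΔpos]
    exact hc
end

section
/- (Theorem 4) Let λ : V → ℝ with λ ≥ 0, and let v_1,…,v_N be a greedy ordering of V for λ with associated priority vector p. Then p minimizes the objective max_{i∈V} (λ_i + Σ_{j∈S_i^{p'}} λ_j) over all priority vectors p': for every bijection p' from V to {1,…,N}, max_{i∈V} (λ_i + Σ_{j∈S_i^p} λ_j) ≤ max_{i∈V} (λ_i + Σ_{j∈S_i^{p'}} λ_j). -/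
open Finset Filter Topology

variable {V : Type*}

/-- The tail `{v_k, …, v_N}` of an enumeration `v` of `V`, from index `k` on. -/
def tailSet [Fintype V] [DecidableEq V] (v : Fin (Fintype.card V) ≃ V)
    (k : Fin (Fintype.card V)) : Finset V :=
  Finset.univ.filter fun w => k ≤ v.symm w

/-- `λ_u + Σ_{w ∈ N_u ∩ S} λ_w`: the weight of link `u` relative to the set `S`. -/
def wgt [Fintype V] [DecidableEq V] (G : SimpleGraph V) [DecidableRel G.Adj]
    (lam : V → ℝ) (u : V) (S : Finset V) : ℝ :=
  lam u + ∑ w ∈ G.neighborFinset u ∩ S, lam w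

/-- `v` is a greedy ordering of `V` for `λ`: every `v_k` minimizes the weight relative to
the remaining tail `{v_k, …, v_N}` among the links of that tail. -/
def GreedyOrdering [Fintype V] [DecidableEq V] (G : SimpleGraph V) [DecidableRel G.Adj]
    (lam : V → ℝ) (v : Fin (Fintype.card V) ≃ V) : Prop :=
  ∀ k u : Fin (Fintype.card V), k ≤ u →
    wgt G lam (v k) (tailSet v k) ≤ wgt G lam (v u) (tailSet v k)

/-- The priority vector associated with an enumeration `v`: `v_1` receives the lowest
priority, and links chosen later receive higher priorities.  With it,
`S_{v_k}^p = N_{v_k} ∩ {v_{k+1}, …, v_N}`. -/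
def assocPrio [Fintype V] (v : Fin (Fintype.card V) ≃ V) : V ≃ Fin (Fintype.card V) :=
  v.symm.trans Fin.revPerm

/-!
Fix a competing priority vector `p'` and a link `v_k`. Let `u` be the link of the tail
`{v_k, …, v_N}` with the lowest `p'`-priority. Every neighbor of `u` in the tail then has higher
`p'`-priority than `u`, so the `p'`-load of `u` is at least the weight of `u` relative to the tail.
By greediness this weight is at least that of `v_k`, which is exactly the load of `v_k` under the
associated priority vector `p`.
-/

theorem pv_assocPrio_lt_iff [Fintype V] (v : Fin (Fintype.card V) ≃ V) (i j : V) :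
    pv (assocPrio v) j < pv (assocPrio v) i ↔ v.symm i < v.symm j := by
  show ((v.symm j).rev : ℕ) < (v.symm i).rev ↔ _
  rw [← Fin.lt_def, Fin.rev_lt_rev]

section

variable [Fintype V] [DecidableEq V] {G : SimpleGraph V} [DecidableRel G.Adj] {lam : V → ℝ}

variable (G lam) in
def load (p : V → ℕ) (i : V) : ℝ :=
  lam i + ∑ j ∈ hpNbrs G p i, lam j

theorem hpNbrs_assocPrio (v : Fin (Fintype.card V) ≃ V) (k : Fin (Fintype.card V)) :
    hpNbrs G (pv (assocPrio v)) (v k) = G.neighborFinset (v k) ∩ tailSet v k := by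
  ext j
  simp only [hpNbrs, tailSet, mem_filter, mem_inter, mem_univ, true_and,
    SimpleGraph.mem_neighborFinset, pv_assocPrio_lt_iff, Equiv.symm_apply_apply]
  refine and_congr_right fun hadj => ⟨le_of_lt, fun hle => hle.lt_of_ne ?_⟩
  rintro rfl
  exact hadj.ne (v.apply_symm_apply j)

theorem load_assocPrio (v : Fin (Fintype.card V) ≃ V) (k : Fin (Fintype.card V)) :
    load G lam (pv (assocPrio v)) (v k) = wgt G lam (v k) (tailSet v k) := by
  rw [load, wgt, hpNbrs_assocPrio]

theorem GreedyOrdering.wgt_le {v : Fin (Fintype.card V) ≃ V} (hv : GreedyOrdering G lam v)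
    {k : Fin (Fintype.card V)} {u : V} (hu : u ∈ tailSet v k) :
    wgt G lam (v k) (tailSet v k) ≤ wgt G lam u (tailSet v k) := by
  simpa using hv k (v.symm u) (by simpa [tailSet] using hu)

theorem wgt_le_load_of_forall_le {p : V → ℕ} (hp : Function.Injective p)
    (hlam : ∀ i, 0 ≤ lam i) {S : Finset V} {u : V} (hu : ∀ j ∈ S, p j ≤ p u) :
    wgt G lam u S ≤ load G lam p u := by
  refine add_le_add le_rfl (sum_le_sum_of_subset_of_nonneg ?_ fun j _ _ => hlam j)
  intro j hj
  obtain ⟨hadj, hjS⟩ := mem_inter.mp hj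
  have hju : j ≠ u := ((G.mem_neighborFinset u j).mp hadj).ne'
  exact mem_filter.mpr ⟨hadj, (hu j hjS).lt_of_ne (hp.ne hju)⟩

end

/-- Theorem 4: the priority vector `p` associated with a greedy ordering of
`V` for `λ` minimizes `max_{i ∈ V} (λ_i + Σ_{j ∈ S_i^{p'}} λ_j)` over all priority
vectors `p'`. -/
theorem greedy_minimizes_max_load [Fintype V] [DecidableEq V] [Nonempty V]
    (G : SimpleGraph V) [DecidableRel G.Adj]
    (lam : V → ℝ) (hlam : ∀ i, 0 ≤ lam i)
    (v : Fin (Fintype.card V) ≃ V) (hv : GreedyOrdering G lam v) :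
    ∀ p' : V ≃ Fin (Fintype.card V),
      Finset.univ.sup' Finset.univ_nonempty
          (fun i => lam i + ∑ j ∈ hpNbrs G (pv (assocPrio v)) i, lam j) ≤
        Finset.univ.sup' Finset.univ_nonempty
          (fun i => lam i + ∑ j ∈ hpNbrs G (pv p') i, lam j) := by
  intro p'
  refine sup'_le _ _ fun i _ => ?_
  obtain ⟨k, rfl⟩ := v.surjective i
  obtain ⟨u, hu, hmax⟩ := exists_max_image (tailSet v k) (pv p') ⟨v k, by simp [tailSet]⟩
  calc load G lam (pv (assocPrio v)) (v k)
      = wgt G lam (v k) (tailSet v k) := load_assocPrio v k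
    _ ≤ wgt G lam u (tailSet v k) := hv.wgt_le hu
    _ ≤ load G lam (pv p') u :=
        wgt_le_load_of_forall_le (Fin.val_injective.comp p'.injective) hlam hmax
    _ ≤ univ.sup' univ_nonempty (load G lam (pv p')) := le_sup' _ (mem_univ u)
end

section
/- (Theorem 5) Let λ : V → ℝ with λ ≥ 0. If there exists some priority vector p' with λ ∈ Λ_{p'} (i.e., λ ∈ Λ_sp), then for any greedy ordering of V for λ, the associated priority vector p satisfies λ ∈ Λ_p. -/
open Finset Filter Topology

variable {V : Type*}

/-- Theorem 5: if `λ ≥ 0` lies in `Λ_sp`, i.e. `λ ∈ Λ_{p'}` for some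
priority vector `p'`, then the priority vector associated with any greedy ordering of `V`
for `λ` satisfies `λ ∈ Λ_p`. -/
theorem greedy_stabilizes_of_mem_LambdaSP [Fintype V] [DecidableEq V] [Nonempty V]
    (G : SimpleGraph V) [DecidableRel G.Adj]
    (lam : V → ℝ) (hlam : ∀ i, 0 ≤ lam i)
    (hsp : ∃ p' : V ≃ Fin (Fintype.card V), lam ∈ LambdaP G (pv p'))
    (v : Fin (Fintype.card V) ≃ V) (hv : GreedyOrdering G lam v) :
    lam ∈ LambdaP G (pv (assocPrio v)) := by
  obtain ⟨p', hp0, hp1⟩ := hsp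
  refine ⟨hlam, fun i => ?_⟩
  set k := v.symm i with hk
  have hi : i = v k := (v.apply_symm_apply i).symm
  set T := tailSet v k with hT
  have hiT : i ∈ T := by simp [hT, tailSet, hk]
  obtain ⟨u, huT, hmax⟩ := T.exists_max_image (pv p') ⟨i, hiT⟩
  have hku : k ≤ v.symm u := by simpa [hT, tailSet] using huT
  have h1 : wgt G lam i T ≤ wgt G lam u T := by
    have := hv k (v.symm u) hku
    simpa [← hi, v.apply_symm_apply] using this
  have hsub : G.neighborFinset u ∩ T ⊆ hpNbrs G (pv p') u := by
    intro w hw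
    simp only [Finset.mem_inter, SimpleGraph.mem_neighborFinset] at hw
    have hne : w ≠ u := fun h => (G.irrefl (h ▸ hw.1))
    have hle : pv p' w ≤ pv p' u := hmax w hw.2
    have hlt : pv p' w < pv p' u :=
      lt_of_le_of_ne hle (fun h => hne (p'.injective (Fin.ext h)))
    simp [hpNbrs, hw.1, hlt]
  have h2 : wgt G lam u T ≤ 1 := by
    refine le_trans ?_ (hp1 u)
    unfold wgt
    have := Finset.sum_le_sum_of_subset_of_nonneg hsub (fun j _ _ => hlam j)
    linarith
  have hsub2 : hpNbrs G (pv (assocPrio v)) i ⊆ G.neighborFinset i ∩ T := by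
    intro j hj
    simp only [hpNbrs, Finset.mem_filter, SimpleGraph.mem_neighborFinset] at hj
    obtain ⟨hadj, hlt⟩ := hj
    have hlt' : (v.symm i) < v.symm j := by
      have : ((v.symm j).rev : ℕ) < ((v.symm i).rev : ℕ) := hlt
      have := Fin.rev_lt_rev.mp (by exact_mod_cast this)
      exact this
    simp only [Finset.mem_inter, SimpleGraph.mem_neighborFinset, hT, tailSet,
      Finset.mem_filter, Finset.mem_univ, true_and]
    exact ⟨hadj, le_of_lt (hk ▸ hlt')⟩
  have h0 : lam i + ∑ j ∈ hpNbrs G (pv (assocPrio v)) i, lam j ≤ wgt G lam i T := by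
    unfold wgt
    have := Finset.sum_le_sum_of_subset_of_nonneg hsub2 (fun j _ _ => hlam j)
    linarith
  linarith
end

section
/- (Theorem 6, deterministic core of the online priority assignment) Let λ ∈ ℝ^V lie in the topological interior of Λ_sp = ∪_p Λ_p, and let λ̂(1), λ̂(2), … be any sequence of nonnegative vectors in ℝ^V converging to λ. Define a sequence of priority vectors by: p(1) is arbitrary, and for l ≥ 2, p(l) = p(l−1) if λ̂(l−1) ∈ Λ_{p(l−1)}, and otherwise p(l) is any priority vector minimizing max_{i∈V} (λ̂_i(l−1) + Σ_{j∈S_i^{p}} λ̂_j(l−1)) over all priority vectors p. Then there exists an index L such that p(l) = p(L) for all l ≥ L, and the limiting priority p(L) satisfies λ ∈ Λ_{p(L)}. -/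
open Finset Filter Topology

variable {V : Type*}

/-- Auxiliary: the per-link load functional. -/
def gfun [Fintype V] [DecidableEq V] (G : SimpleGraph V) [DecidableRel G.Adj]
    (q : V ≃ Fin (Fintype.card V)) (i : V) (mu : V → ℝ) : ℝ :=
  mu i + ∑ j ∈ hpNbrs G (pv q) i, mu j

lemma gfun_tendsto [Fintype V] [DecidableEq V] (G : SimpleGraph V) [DecidableRel G.Adj]
    (q : V ≃ Fin (Fintype.card V)) (i : V) {lam : V → ℝ} {lamhat : ℕ → V → ℝ}
    (hconv : Filter.Tendsto lamhat Filter.atTop (nhds lam)) :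
    Filter.Tendsto (fun m => gfun G q i (lamhat m)) Filter.atTop (nhds (gfun G q i lam)) := by
  have h1 : Filter.Tendsto (fun m => lamhat m i) Filter.atTop (nhds (lam i)) :=
    (continuous_apply i).continuousAt.tendsto.comp hconv
  have h2 : Filter.Tendsto (fun m => ∑ j ∈ hpNbrs G (pv q) i, lamhat m j) Filter.atTop
      (nhds (∑ j ∈ hpNbrs G (pv q) i, lam j)) := by
    apply tendsto_finset_sum
    intro j _
    exact (continuous_apply j).continuousAt.tendsto.comp hconv
  exact h1.add h2

/-- Theorem 6, deterministic core of the online priority assignment: let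
`λ` lie in the interior of `Λ_sp = ∪_p Λ_p` and let `λ̂(1), λ̂(2), …` be nonnegative
vectors converging to `λ`.  If the priority vectors `p(l)` are updated by keeping
`p(l) = p(l-1)` whenever `λ̂(l-1) ∈ Λ_{p(l-1)}` and otherwise choosing `p(l)` to minimize
`max_{i ∈ V} (λ̂_i(l-1) + Σ_{j ∈ S_i^p} λ̂_j(l-1))` over all priority vectors, then the
sequence of priorities is eventually constant, and its limit `p(L)` satisfies
`λ ∈ Λ_{p(L)}`. -/
theorem online_priority_assignment_stabilizes [Fintype V] [DecidableEq V] [Nonempty V]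
    (G : SimpleGraph V) [DecidableRel G.Adj]
    (lam : V → ℝ)
    (hlam : lam ∈ interior (⋃ q : V ≃ Fin (Fintype.card V), LambdaP G (pv q)))
    (lamhat : ℕ → V → ℝ) (hnn : ∀ l i, 0 ≤ lamhat l i)
    (hconv : Tendsto lamhat atTop (𝓝 lam))
    (p : ℕ → V ≃ Fin (Fintype.card V))
    (hkeep : ∀ l, 2 ≤ l →
      lamhat (l - 1) ∈ LambdaP G (pv (p (l - 1))) → p l = p (l - 1))
    (hmin : ∀ l, 2 ≤ l → lamhat (l - 1) ∉ LambdaP G (pv (p (l - 1))) →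
      ∀ q : V ≃ Fin (Fintype.card V),
        Finset.univ.sup' Finset.univ_nonempty
            (fun i => lamhat (l - 1) i + ∑ j ∈ hpNbrs G (pv (p l)) i, lamhat (l - 1) j) ≤
          Finset.univ.sup' Finset.univ_nonempty
            (fun i => lamhat (l - 1) i + ∑ j ∈ hpNbrs G (pv q) i, lamhat (l - 1) j)) :
    ∃ L, (∀ l, L ≤ l → p l = p L) ∧ lam ∈ LambdaP G (pv (p L)) := by
  classical
  -- λ is nonnegative
  have hlamU : lam ∈ ⋃ q : V ≃ Fin (Fintype.card V), LambdaP G (pv q) := interior_subset hlam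
  rw [Set.mem_iUnion] at hlamU
  obtain ⟨q0, hq0⟩ := hlamU
  have hlam0 : ∀ i, 0 ≤ lam i := hq0.1
  -- an r-ball around λ inside the union
  obtain ⟨r, hr, hball⟩ := Metric.isOpen_iff.mp isOpen_interior lam hlam
  -- the perturbed point λ + r/2 lies in some Λ_{q*}
  have hmemU : (fun i => lam i + r / 2) ∈
      ⋃ q : V ≃ Fin (Fintype.card V), LambdaP G (pv q) := by
    apply interior_subset
    apply hball
    rw [Metric.mem_ball, dist_pi_lt_iff hr]
    intro i
    have he : lam i + r / 2 - lam i = r / 2 := by ring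
    rw [Real.dist_eq, he, abs_of_pos (by positivity)]
    linarith
  rw [Set.mem_iUnion] at hmemU
  obtain ⟨qs, hqs⟩ := hmemU
  -- slack at λ for q*
  have hslack : ∀ i, gfun G qs i lam ≤ 1 - r / 2 := by
    intro i
    have h1 := hqs.2 i
    have h2 : ∑ j ∈ hpNbrs G (pv qs) i, lam j ≤
        ∑ j ∈ hpNbrs G (pv qs) i, (lam j + r / 2) := by
      apply Finset.sum_le_sum; intro j _; linarith
    simp only [gfun]
    linarith
  -- uniform eventual closeness
  have hdpos : (0:ℝ) < r / 8 := by positivity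
  have hev : ∀ᶠ m in atTop, ∀ (q : V ≃ Fin (Fintype.card V)) (i : V),
      |gfun G q i (lamhat m) - gfun G q i lam| < r / 8 := by
    rw [Filter.eventually_all]
    intro q
    rw [Filter.eventually_all]
    intro i
    have := (gfun_tendsto G q i hconv).eventually
      (Metric.ball_mem_nhds (gfun G q i lam) hdpos)
    filter_upwards [this] with m hm
    simpa [Real.dist_eq] using hm
  obtain ⟨L0, hL0⟩ := eventually_atTop.mp hev
  by_cases hA : ∀ l, L0 + 2 ≤ l → lamhat (l - 1) ∈ LambdaP G (pv (p (l - 1)))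
  · -- the keep rule always applies beyond L0+2
    have hconst : ∀ l, L0 + 2 ≤ l → p l = p (L0 + 2) := by
      intro l hl
      induction l, hl using Nat.le_induction with
      | base => rfl
      | succ l hl ih =>
        have := hkeep (l + 1) (by omega) (by simpa using hA (l + 1) (by omega))
        simpa using this.trans ih
    refine ⟨L0 + 2, fun l hl => hconst l hl, ?_⟩
    have hin : ∀ m, L0 + 2 ≤ m → lamhat m ∈ LambdaP G (pv (p (L0 + 2))) := by
      intro m hm
      have h1 := hA (m + 1) (by omega)
      simp only [Nat.add_sub_cancel] at h1
      rwa [hconst m hm] at h1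
    refine ⟨hlam0, fun i => ?_⟩
    have hle : ∀ᶠ m in atTop, gfun G (p (L0 + 2)) i (lamhat m) ≤ 1 := by
      filter_upwards [eventually_ge_atTop (L0 + 2)] with m hm
      exact (hin m hm).2 i
    exact le_of_tendsto (gfun_tendsto G (p (L0 + 2)) i hconv) hle
  · push_neg at hA
    obtain ⟨l0, hl0, hnotin⟩ := hA
    have hl1 : L0 ≤ l0 - 1 := by omega
    -- bound on the minimized sup at λ̂(l0-1)
    have hbound : ∀ i, gfun G (p l0) i (lamhat (l0 - 1)) ≤ 1 - r / 2 + r / 8 := by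
      intro i
      have h1 := hmin l0 (by omega) hnotin qs
      have h2 : gfun G (p l0) i (lamhat (l0 - 1)) ≤
          Finset.univ.sup' Finset.univ_nonempty
            (fun i => lamhat (l0 - 1) i + ∑ j ∈ hpNbrs G (pv (p l0)) i, lamhat (l0 - 1) j) :=
        Finset.le_sup'
          (fun i => lamhat (l0 - 1) i + ∑ j ∈ hpNbrs G (pv (p l0)) i, lamhat (l0 - 1) j)
          (Finset.mem_univ i)
      have h3 : Finset.univ.sup' Finset.univ_nonempty
          (fun i => lamhat (l0 - 1) i + ∑ j ∈ hpNbrs G (pv qs) i, lamhat (l0 - 1) j) ≤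
          1 - r / 2 + r / 8 := by
        apply Finset.sup'_le
        intro i _
        have h4 := abs_lt.mp (hL0 (l0 - 1) hl1 qs i)
        have h5 := hslack i
        have h6 : gfun G qs i (lamhat (l0 - 1)) ≤ 1 - r / 2 + r / 8 := by
          linarith [h4.1, h4.2]
        simpa [gfun] using h6
      exact h2.trans (h1.trans h3)
    -- λ has slack for p l0
    have hlamb : ∀ i, gfun G (p l0) i lam ≤ 1 - r / 2 + 2 * (r / 8) := by
      intro i
      have h4 := abs_lt.mp (hL0 (l0 - 1) hl1 (p l0) i)
      linarith [hbound i, h4.1, h4.2]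
    -- λ̂(m) ∈ Λ_{p l0} for all m ≥ L0
    have hin : ∀ m, L0 ≤ m → lamhat m ∈ LambdaP G (pv (p l0)) := by
      intro m hm
      refine ⟨hnn m, fun i => ?_⟩
      have h4 := abs_lt.mp (hL0 m hm (p l0) i)
      have hfin : gfun G (p l0) i (lamhat m) ≤ 1 := by
        linarith [hlamb i, h4.1, h4.2]
      simpa [gfun] using hfin
    have hconst : ∀ l, l0 ≤ l → p l = p l0 := by
      intro l hl
      induction l, hl using Nat.le_induction with
      | base => rfl
      | succ l hl ih =>
        have hmem : lamhat l ∈ LambdaP G (pv (p l)) := by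
          rw [ih]; exact hin l (by omega)
        have := hkeep (l + 1) (by omega) (by simpa using hmem)
        simpa using this.trans ih
    refine ⟨l0, fun l hl => hconst l hl, ?_⟩
    refine ⟨hlam0, fun i => ?_⟩
    have hfin : gfun G (p l0) i lam ≤ 1 := by linarith [hlamb i]
    simpa [gfun] using hfin
end
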